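/- Let n ≥ 2, 1 < p < n, θ > 1, q = 1 + ((n−p)/p)(θ/(θ−1)), R > 0. For a radially symmetric C^1 function u on B_R with compact support, setting v(y) = u(x) with y = R(−(q−1)log_q(|x|/R))^{−1/(q−1)} x/|x|, one has ∫_{R^n} |y|^{nθ/p − n} |∇v(y)|^θ dy = ∫_{B_R} |x|^{nθ/p − n} |∇_r u(x)|^θ dx. -/

import Mathlib

open MeasureTheory

/-- The q-logarithm `log_q r = (r^(1-q) - 1)/(1-q)`. -/
noncomputable def logq (q r : ℝ) : ℝ := (r ^ (1 - q) - 1) / (1 - q)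

/-- The inverse of the transformation `x ↦ y = R(−(q−1) log_q(‖x‖/R))^{−1/(q−1)} x/‖x‖`. -/
noncomputable def invTrans (n : ℕ) (q R : ℝ) (y : EuclideanSpace ℝ (Fin n)) :
    EuclideanSpace ℝ (Fin n) :=
  (R * (1 + (‖y‖ / R) ^ (1 - q)) ^ (1 / (1 - q)) * ‖y‖⁻¹) • y

/-!
Both sides are integrals of radial functions, so polar coordinates reduce them to integrals in the
radius. The radius map `ψ s = R (1 + (s/R)^(1-q))^(1/(1-q))` of the inverse transformation maps
`(0, ∞)` increasingly onto `(0, R)` and satisfies `ψ' s = (ψ s / s)^q`. Writing `u = f ∘ ‖·‖`, we get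
`v = f ∘ ψ ∘ ‖·‖`, so `|∇v(y)| = |f'(ψ s)| (ψ s / s)^q` at `s = ‖y‖`, and the substitution
`r = ψ s` turns `∫₀^R r^β |f' r|^θ dr` into `∫₀^∞ s^β |f'(ψ s)|^θ (ψ s / s)^(qθ) ds` precisely
because the total radial weight exponent `β = (n - 1) + (nθ/p - n)` equals `q (θ - 1)`.
-/

open Set Real Filter Topology

section Radial

variable {E : Type*} [NormedAddCommGroup E] [InnerProductSpace ℝ E]

theorem norm_inv_norm_smul_self {x : E} (hx : x ≠ 0) : ‖‖x‖⁻¹ • x‖ = 1 := by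
  simp [norm_smul, hx]

theorem hasFDerivAt_norm_of_ne_zero {x : E} (hx : x ≠ 0) :
    HasFDerivAt (‖·‖) (innerSL ℝ (‖x‖⁻¹ • x)) x := by
  have hx' : ‖x‖ ≠ 0 := norm_ne_zero_iff.2 hx
  have h := (hasStrictFDerivAt_norm_sq x).hasFDerivAt.sqrt (pow_ne_zero 2 hx')
  simp only [Real.sqrt_sq (norm_nonneg _)] at h
  refine h.congr_fderiv ?_
  ext y
  simp [field]

variable [CompleteSpace E]

theorem HasDerivAt.hasGradientAt_comp_norm {g : ℝ → ℝ} {c : ℝ} {x : E} (hx : x ≠ 0)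
    (hg : HasDerivAt g c ‖x‖) : HasGradientAt (fun y => g ‖y‖) (c • ‖x‖⁻¹ • x) x := by
  rw [hasGradientAt_iff_hasFDerivAt]
  refine (hg.comp_hasFDerivAt x (hasFDerivAt_norm_of_ne_zero hx)).congr_fderiv ?_
  ext y
  simp

theorem norm_gradient_of_eventuallyEq_comp_norm {f : E → ℝ} {g : ℝ → ℝ} {c : ℝ} {x : E}
    (hx : x ≠ 0) (hg : HasDerivAt g c ‖x‖) (hf : f =ᶠ[𝓝 x] fun y => g ‖y‖) :
    ‖gradient f x‖ = |c| := by
  rw [((hg.hasGradientAt_comp_norm hx).congr_of_eventuallyEq hf).gradient, norm_smul,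
    norm_inv_norm_smul_self hx, Real.norm_eq_abs, mul_one]

theorem norm_radial_gradient_comp_norm {g : ℝ → ℝ} {c : ℝ} {x : E} (hx : x ≠ 0)
    (hg : HasDerivAt g c ‖x‖) :
    ‖(inner ℝ (‖x‖⁻¹ • x) (gradient (fun y => g ‖y‖) x) : ℝ) • (‖x‖⁻¹ • x)‖ = |c| := by
  rw [(hg.hasGradientAt_comp_norm hx).gradient, real_inner_smul_right,
    real_inner_self_eq_norm_sq, norm_smul, norm_inv_norm_smul_self hx]
  simp

end Radial

theorem exists_differentiable_radial_profile {E : Type*} [NormedAddCommGroup E]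
    [NormedSpace ℝ E] [Nontrivial E] {u : E → ℝ} (hu : Differentiable ℝ u)
    (hrad : ∀ x y : E, ‖x‖ = ‖y‖ → u x = u y) :
    ∃ f : ℝ → ℝ, Differentiable ℝ f ∧ u = fun x => f ‖x‖ := by
  obtain ⟨e, he⟩ := exists_norm_eq E zero_le_one
  refine ⟨fun r => u (r • e), hu.comp (differentiable_id.smul_const e), funext fun x => hrad _ _ ?_⟩
  rw [norm_smul, he, norm_norm, mul_one]

theorem setIntegral_ball_fun_norm_addHaar {E F : Type*} [NormedAddCommGroup E]
    [NormedSpace ℝ E] [Nontrivial E] [FiniteDimensional ℝ E] [MeasurableSpace E] [BorelSpace E]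
    [NormedAddCommGroup F] [NormedSpace ℝ F] (μ : Measure E) [μ.IsAddHaarMeasure]
    (f : ℝ → F) (R : ℝ) :
    ∫ x in Metric.ball 0 R, f ‖x‖ ∂μ = Module.finrank ℝ E • μ.real (Metric.ball 0 1) •
      ∫ r in Ioo 0 R, r ^ (Module.finrank ℝ E - 1) • f r := by
  have hind (x : E) : (Metric.ball 0 R).indicator (fun x => f ‖x‖) x = (Iio R).indicator f ‖x‖ :=
    by by_cases h : ‖x‖ < R <;> simp [indicator, h]
  rw [← integral_indicator measurableSet_ball, funext hind, integral_fun_norm_addHaar μ, ← Iio_inter_Ioi, ← Measure.restrict_restrict measurableSet_Iio,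
    ← integral_indicator measurableSet_Iio]
  simp_rw [indicator_smul]

/-- The radial profile of `invTrans`: `invTrans n q R y = (invTransRadius q R ‖y‖ / ‖y‖) • y`. -/
noncomputable def invTransRadius (q R s : ℝ) : ℝ := R * (1 + (s / R) ^ (1 - q)) ^ (1 / (1 - q))

section InvTransRadius

variable {q R : ℝ}

theorem invTransRadius_pos (hR : 0 < R) {s : ℝ} (hs : 0 < s) : 0 < invTransRadius q R s := by
  unfold invTransRadius
  positivity

theorem invTransRadius_lt (hR : 0 < R) (hq : 1 < q) {s : ℝ} (hs : 0 < s) :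
    invTransRadius q R s < R := by
  have hA : 1 < 1 + (s / R) ^ (1 - q) := lt_add_of_pos_right 1 (by positivity)
  have h : (1 + (s / R) ^ (1 - q)) ^ (1 / (1 - q)) < 1 :=
    rpow_lt_one_of_one_lt_of_neg hA (one_div_neg.2 (by linarith))
  exact (mul_lt_mul_of_pos_left h hR).trans_eq (mul_one R)

theorem hasDerivAt_invTransRadius (hR : 0 < R) (hq : 1 < q) {s : ℝ} (hs : 0 < s) :
    HasDerivAt (invTransRadius q R) ((invTransRadius q R s / s) ^ q) s := by
  have hq' : 1 - q ≠ 0 := by linarith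
  have hsR : 0 < s / R := div_pos hs hR
  have hA : 0 < 1 + (s / R) ^ (1 - q) := by positivity
  have h := ((((hasDerivAt_id' s).div_const R).rpow_const (p := 1 - q) (Or.inl hsR.ne')).const_add
    1 |>.rpow_const (p := 1 / (1 - q)) (Or.inl hA.ne')).const_mul R
  refine h.congr_deriv ?_
  have hψ : invTransRadius q R s / s = (1 + (s / R) ^ (1 - q)) ^ (1 / (1 - q)) * (s / R)⁻¹ := by
    unfold invTransRadius
    field_simp
  rw [hψ, mul_rpow (by positivity) (by positivity), ← rpow_mul hA.le, inv_rpow hsR.le,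
    ← rpow_neg hsR.le, show 1 / (1 - q) * q = 1 / (1 - q) - 1 by field_simp; ring,
    show -q = 1 - q - 1 by ring]
  field_simp

theorem strictMonoOn_invTransRadius (hR : 0 < R) (hq : 1 < q) :
    StrictMonoOn (invTransRadius q R) (Ioi 0) := by
  refine strictMonoOn_of_deriv_pos (convex_Ioi 0)
    (fun s hs => (hasDerivAt_invTransRadius hR hq hs).continuousAt.continuousWithinAt) ?_
  intro s hs
  rw [interior_Ioi] at hs
  rw [(hasDerivAt_invTransRadius hR hq hs).deriv]
  exact rpow_pos_of_pos (div_pos (invTransRadius_pos hR hs) hs) q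

theorem invTransRadius_image_Ioi (hR : 0 < R) (hq : 1 < q) :
    invTransRadius q R '' Ioi 0 = Ioo 0 R := by
  have hq' : 1 - q ≠ 0 := by linarith
  refine Subset.antisymm ?_ fun r ⟨hr0, hrR⟩ => ?_
  · rintro _ ⟨s, hs, rfl⟩
    exact ⟨invTransRadius_pos hR hs, invTransRadius_lt hR hq hs⟩
  -- The preimage of `r` is the radius of the forward transformation `x ↦ y` at `‖x‖ = r`.
  have hr : 1 < (r / R) ^ (1 - q) :=
    (one_lt_rpow_iff_of_pos (div_pos hr0 hR)).2 (Or.inr ⟨(div_lt_one hR).2 hrR, by linarith⟩)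
  have hB : 0 < (r / R) ^ (1 - q) - 1 := by linarith
  refine ⟨R * ((r / R) ^ (1 - q) - 1) ^ (1 / (1 - q)), mul_pos hR (rpow_pos_of_pos hB _), ?_⟩
  rw [invTransRadius, mul_div_cancel_left₀ _ hR.ne', one_div, rpow_inv_rpow hB.le hq',
    add_sub_cancel, rpow_rpow_inv (div_pos hr0 hR).le hq', mul_div_cancel₀ _ hR.ne']

theorem norm_invTrans (hR : 0 < R) {n : ℕ} {y : EuclideanSpace ℝ (Fin n)} (hy : y ≠ 0) :
    ‖invTrans n q R y‖ = invTransRadius q R ‖y‖ := by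
  have hy' : 0 < ‖y‖ := norm_pos_iff.2 hy
  have hψ := invTransRadius_pos (q := q) hR hy'
  rw [invTrans, norm_smul, norm_of_nonneg (by unfold invTransRadius at hψ; positivity), mul_assoc,
    inv_mul_cancel₀ hy'.ne', mul_one, invTransRadius]

theorem integral_Ioi_comp_invTransRadius (hR : 0 < R) (hq : 1 < q) {n : ℕ} (hn : 1 ≤ n)
    {α θ : ℝ} (hα : (n : ℝ) - 1 + α = q * (θ - 1)) (g : ℝ → ℝ) :
    ∫ s in Ioi 0, s ^ (n - 1) •
        (s ^ α * |g (invTransRadius q R s) * (invTransRadius q R s / s) ^ q| ^ θ) =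
      ∫ r in Ioo 0 R, r ^ (n - 1) • (r ^ α * |g r| ^ θ) := by
  rw [← invTransRadius_image_Ioi hR hq, integral_image_eq_integral_abs_deriv_smul
    measurableSet_Ioi (fun s hs => (hasDerivAt_invTransRadius hR hq hs).hasDerivWithinAt)
    (strictMonoOn_invTransRadius hR hq).injOn]
  refine setIntegral_congr_fun measurableSet_Ioi fun s (hs : 0 < s) => ?_
  have hpow {r : ℝ} (hr : 0 < r) : r ^ (n - 1) * r ^ α = r ^ (q * (θ - 1)) := by
    rw [← hα, rpow_add hr, ← rpow_natCast, Nat.cast_sub hn, Nat.cast_one]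
  set t := invTransRadius q R s
  have ht : 0 < t := invTransRadius_pos hR hs
  have hw : 0 < (t / s) ^ q := rpow_pos_of_pos (div_pos ht hs) q
  simp only [smul_eq_mul]
  rw [abs_mul, abs_of_pos hw, mul_rpow (abs_nonneg _) hw.le, ← rpow_mul (div_pos ht hs).le,
    show q * θ = q + q * (θ - 1) by ring, rpow_add (div_pos ht hs), div_rpow ht.le hs.le (q * _),
    ← mul_assoc, hpow hs, ← mul_assoc (t ^ (n - 1)), hpow ht]
  field_simp

end InvTransRadius

theorem stmt_15_general (n : ℕ) (hn : 2 ≤ n) (p θ R q : ℝ) (hp1 : 1 < p) (hpn : p < n)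
    (hθ : 1 < θ) (hR : 0 < R)
    (hq : q = 1 + (((n : ℝ) - p) / p) * (θ / (θ - 1)))
    (u : EuclideanSpace ℝ (Fin n) → ℝ) (hu : ContDiff ℝ 1 u)
    (hrad : ∀ x y : EuclideanSpace ℝ (Fin n), ‖x‖ = ‖y‖ → u x = u y)
    (v : EuclideanSpace ℝ (Fin n) → ℝ)
    (hv : ∀ y : EuclideanSpace ℝ (Fin n), y ≠ 0 → v y = u (invTrans n q R y)) :
    ∫ y : EuclideanSpace ℝ (Fin n), ‖y‖ ^ ((n : ℝ) * θ / p - n) * ‖gradient v y‖ ^ θ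
      = ∫ x in Metric.ball (0 : EuclideanSpace ℝ (Fin n)) R,
          ‖x‖ ^ ((n : ℝ) * θ / p - n) *
            ‖((inner ℝ ((‖x‖⁻¹) • x) (gradient u x) : ℝ)) • ((‖x‖⁻¹) • x)‖ ^ θ := by
  have hq1 : 1 < q := by
    rw [hq, lt_add_iff_pos_right]
    exact mul_pos (div_pos (sub_pos.2 hpn) (by linarith)) (div_pos (by linarith) (sub_pos.2 hθ))
  have hα : (n : ℝ) - 1 + ((n : ℝ) * θ / p - n) = q * (θ - 1) := by
    have hp : p ≠ 0 := by linarith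
    have hθ' : θ - 1 ≠ 0 := by linarith
    rw [hq]
    field_simp
    ring
  have : Nonempty (Fin n) := ⟨⟨0, by omega⟩⟩
  obtain ⟨f, hf, rfl⟩ := exists_differentiable_radial_profile (hu.differentiable one_ne_zero) hrad
  set ψ := invTransRadius q R
  have hae : ∀ᵐ y : EuclideanSpace ℝ (Fin n), y ≠ 0 := compl_mem_ae_iff.2 (measure_singleton 0)
  have hgv {y : EuclideanSpace ℝ (Fin n)} (hy : y ≠ 0) :
      ‖gradient v y‖ = |deriv f (ψ ‖y‖) * (ψ ‖y‖ / ‖y‖) ^ q| := by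
    refine norm_gradient_of_eventuallyEq_comp_norm (g := f ∘ ψ) hy
      ((hf _).hasDerivAt.comp _ (hasDerivAt_invTransRadius hR hq1 (norm_pos_iff.2 hy))) ?_
    filter_upwards [isOpen_ne.mem_nhds hy] with z hz
    exact (hv z hz).trans (congrArg f (norm_invTrans hR hz))
  set G := fun s => s ^ ((n : ℝ) * θ / p - n) * |deriv f (ψ s) * (ψ s / s) ^ q| ^ θ
  set H := fun r => r ^ ((n : ℝ) * θ / p - n) * |deriv f r| ^ θ
  calc _ = ∫ y : EuclideanSpace ℝ (Fin n), G ‖y‖ :=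
        integral_congr_ae (by filter_upwards [hae] with y hy; rw [hgv hy])
    _ = ∫ x in Metric.ball (0 : EuclideanSpace ℝ (Fin n)) R, H ‖x‖ := by
      rw [integral_fun_norm_addHaar, setIntegral_ball_fun_norm_addHaar, finrank_euclideanSpace_fin]
      congr 2
      exact integral_Ioi_comp_invTransRadius hR hq1 (by omega) hα _
    _ = _ := setIntegral_congr_ae measurableSet_ball (by
        filter_upwards [hae] with x hx _
        rw [norm_radial_gradient_comp_norm hx (hf _).hasDerivAt])

/-- Change of variables for the gradient term: with `q = 1 + ((n−p)/p)(θ/(θ−1))` and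
    `v(y) = u(x)` under `y = R(−(q−1)log_q(‖x‖/R))^{−1/(q−1)} x/‖x‖`, for radial `C¹`
    compactly supported `u` on `B_R`:
    `∫_{ℝⁿ} ‖y‖^{nθ/p−n} |∇v(y)|^θ dy = ∫_{B_R} ‖x‖^{nθ/p−n} |∇_r u(x)|^θ dx`. -/
theorem stmt_15 (n : ℕ) (hn : 2 ≤ n) (p θ R q : ℝ) (hp1 : 1 < p) (hpn : p < n)
    (hθ : 1 < θ) (hR : 0 < R)
    (hq : q = 1 + (((n : ℝ) - p) / p) * (θ / (θ - 1)))
    (u : EuclideanSpace ℝ (Fin n) → ℝ) (hu : ContDiff ℝ 1 u)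
    (hsupp : HasCompactSupport u)
    (hsuppR : tsupport u ⊆ Metric.ball (0 : EuclideanSpace ℝ (Fin n)) R)
    (hrad : ∀ x y : EuclideanSpace ℝ (Fin n), ‖x‖ = ‖y‖ → u x = u y)
    (v : EuclideanSpace ℝ (Fin n) → ℝ)
    (hv : ∀ y : EuclideanSpace ℝ (Fin n), y ≠ 0 → v y = u (invTrans n q R y)) :
    ∫ y : EuclideanSpace ℝ (Fin n), ‖y‖ ^ ((n : ℝ) * θ / p - n) * ‖gradient v y‖ ^ θ
      = ∫ x in Metric.ball (0 : EuclideanSpace ℝ (Fin n)) R,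
          ‖x‖ ^ ((n : ℝ) * θ / p - n) *
            ‖((inner ℝ ((‖x‖⁻¹) • x) (gradient u x) : ℝ)) • ((‖x‖⁻¹) • x)‖ ^ θ :=
  stmt_15_general n hn p θ R q hp1 hpn hθ hR hq u hu hrad v hv
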